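/- arXiv:1807.08737 — 7 statements merged into one kernel-verified Lean document; each statement's English description precedes it below -/
import Mathlib

section
/- Let U ⊆ ℂ be open and let f : ℂ → ℂ be holomorphic on U (complex differentiable at every point of U, with complex derivative f′). Define α : ℂ → ℝ by α(z) = (1 − |f(z)|²)/(1 + |f(z)|²). Then for every z ∈ U, Δα(z) = −(8|f′(z)|²/(1+|f(z)|²)²)·α(z), where Δ denotes the Euclidean Laplacian on ℂ ≅ ℝ², i.e. the sum of the second directional derivatives in the directions 1 and i. -/
/-!
Write `α = φ ∘ u` with `u = ‖f‖²` and `φ s = (1 - s) / (1 + s)`. Along each direction `v` the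
second derivative obeys the one-variable chain rule
`∂ᵥ²(φ ∘ u) = φ''(u) (∂ᵥu)² + φ'(u) ∂ᵥ²u`, so summing over `v = 1, i` gives
`Δα = φ''(u) |∇u|² + φ'(u) Δu`. Since `∂ᵥf = v f'` for holomorphic `f`, we get
`|∇u|² = 4 |f|² |f'|²` and `Δu = 4 |f'|²`, the terms `⟪f, v² f''⟫` cancelling because `i² = -1`.
With `φ' = -2 / (1 + s)²` and `φ'' = 4 / (1 + s)³` this is `Δα = -8 |f'|² (1 - u) / (1 + u)³`.
-/

open Filter Topology Complex

section SecondDirectionalDerivative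

variable {E F : Type*} [NormedAddCommGroup E] [NormedSpace ℝ E]

theorem ContDiffAt.differentiableAt_fderiv_apply [NormedAddCommGroup F] [NormedSpace ℝ F]
    {g : E → F} {z : E} (hg : ContDiffAt ℝ 2 g z) (v : E) :
    DifferentiableAt ℝ (fun w => fderiv ℝ g w v) z :=
  ((hg.fderiv_right (m := 1) (by norm_num)).differentiableAt one_ne_zero).clm_apply
    (differentiableAt_const v)

theorem fderiv_fderiv_comp_apply {u : E → ℝ} {φ φ' : ℝ → ℝ} {φ'' : ℝ} {z : E}
    (hu : ContDiffAt ℝ 2 u z) (hφ : ∀ᶠ s in 𝓝 (u z), HasDerivAt φ (φ' s) s)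
    (hφ' : HasDerivAt φ' φ'' (u z)) (v : E) :
    fderiv ℝ (fun w => fderiv ℝ (φ ∘ u) w v) z v =
      φ'' * fderiv ℝ u z v ^ 2 + φ' (u z) * fderiv ℝ (fun w => fderiv ℝ u w v) z v := by
  have hfirst : (fun w => fderiv ℝ (φ ∘ u) w v) =ᶠ[𝓝 z]
      fun w => φ' (u w) * fderiv ℝ u w v := by
    filter_upwards [hu.continuousAt.eventually hφ,
      (hu.eventually (by simp)).mono fun w hw => hw.differentiableAt two_ne_zero] with w hφw huw
    rw [(hφw.comp_hasFDerivAt w huw.hasFDerivAt).fderiv]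
    simp
  have hd : HasFDerivAt (fun w => φ' (u w) * fderiv ℝ u w v) _ z :=
    (hφ'.comp_hasFDerivAt z (hu.differentiableAt two_ne_zero).hasFDerivAt).mul
      (hu.differentiableAt_fderiv_apply v).hasFDerivAt
  rw [hfirst.fderiv_eq, hd.fderiv]
  simp only [Function.comp_apply, add_apply, smul_apply,
    smul_eq_mul]
  ring

variable [NormedAddCommGroup F] [InnerProductSpace ℝ F]

theorem fderiv_norm_sq_comp_apply {f : E → F} {w : E} (hf : DifferentiableAt ℝ f w) (v : E) :
    fderiv ℝ (fun w => ‖f w‖ ^ 2) w v = 2 * inner ℝ (f w) (fderiv ℝ f w v) := by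
  rw [hf.hasFDerivAt.norm_sq.fderiv]
  simp

theorem fderiv_fderiv_norm_sq_apply {f : E → F} {z : E} (hf : ContDiffAt ℝ 2 f z) (v : E) :
    fderiv ℝ (fun w => fderiv ℝ (fun w => ‖f w‖ ^ 2) w v) z v =
      2 * (‖fderiv ℝ f z v‖ ^ 2 + inner ℝ (f z) (fderiv ℝ (fun w => fderiv ℝ f w v) z v)) := by
  have hfirst : (fun w => fderiv ℝ (fun w => ‖f w‖ ^ 2) w v) =ᶠ[𝓝 z]
      fun w => 2 * inner ℝ (f w) (fderiv ℝ f w v) := by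
    filter_upwards [(hf.eventually (by simp)).mono fun w hw => hw.differentiableAt two_ne_zero]
      with w hfw
    exact fderiv_norm_sq_comp_apply hfw v
  have hd : HasFDerivAt (fun w => 2 * inner ℝ (f w) (fderiv ℝ f w v)) _ z :=
    ((hf.differentiableAt two_ne_zero).hasFDerivAt.inner ℝ
      (hf.differentiableAt_fderiv_apply v).hasFDerivAt).const_mul 2
  rw [hfirst.fderiv_eq, hd.fderiv]
  simp only [smul_apply, ContinuousLinearMap.comp_apply,
    ContinuousLinearMap.prod_apply, fderivInnerCLM_apply, real_inner_self_eq_norm_sq, smul_eq_mul]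
  ring

end SecondDirectionalDerivative

theorem hasDerivAt_one_sub_div_one_add {s : ℝ} (hs : 1 + s ≠ 0) :
    HasDerivAt (fun s => (1 - s) / (1 + s)) (-2 / (1 + s) ^ 2) s := by
  refine (((hasDerivAt_id' s).const_sub 1).fun_div ((hasDerivAt_id' s).const_add 1) hs).congr_deriv
    ?_
  field_simp
  ring

theorem hasDerivAt_neg_two_div_one_add_sq {s : ℝ} (hs : 1 + s ≠ 0) :
    HasDerivAt (fun s => -2 / (1 + s) ^ 2) (4 / (1 + s) ^ 3) s := by
  refine ((hasDerivAt_const s (-2 : ℝ)).fun_div (((hasDerivAt_id' s).const_add 1).fun_pow 2)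
    (pow_ne_zero 2 hs)).congr_deriv ?_
  field_simp
  ring

theorem Complex.inner_sq_add_inner_I_mul_sq (a b : ℂ) :
    inner ℝ a b ^ 2 + inner ℝ a (I * b) ^ 2 = ‖a‖ ^ 2 * ‖b‖ ^ 2 := by
  simp only [Complex.inner, Complex.sq_norm, normSq_apply, mul_re, mul_im, conj_re, conj_im,
    I_re, I_im]
  ring

section Holomorphic

variable {f : ℂ → ℂ} {z : ℂ}

theorem DifferentiableAt.fderiv_real_apply (hf : DifferentiableAt ℂ f z) (v : ℂ) :
    fderiv ℝ f z v = v * deriv f z := by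
  rw [(hf.hasDerivAt.hasFDerivAt.restrictScalars ℝ).fderiv]
  simp

theorem AnalyticAt.fderiv_fderiv_real_apply (hf : AnalyticAt ℂ f z) (v : ℂ) :
    fderiv ℝ (fun w => fderiv ℝ f w v) z v = v ^ 2 * deriv (deriv f) z := by
  have hfirst : (fun w => fderiv ℝ f w v) =ᶠ[𝓝 z] fun w => v * deriv f w := by
    filter_upwards [hf.eventually_analyticAt] with w hw
    exact hw.differentiableAt.fderiv_real_apply v
  have hd : DifferentiableAt ℂ (fun w => v * deriv f w) z :=
    hf.deriv.differentiableAt.const_mul v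
  rw [hfirst.fderiv_eq, hd.fderiv_real_apply, deriv_const_mul _ hf.deriv.differentiableAt]
  ring

theorem AnalyticAt.fderiv_norm_sq_one_sq_add_fderiv_norm_sq_I_sq (hf : AnalyticAt ℂ f z) :
    fderiv ℝ (fun w => ‖f w‖ ^ 2) z 1 ^ 2 + fderiv ℝ (fun w => ‖f w‖ ^ 2) z I ^ 2 =
      4 * ‖f z‖ ^ 2 * ‖deriv f z‖ ^ 2 := by
  have hfR : DifferentiableAt ℝ f z := hf.differentiableAt.restrictScalars ℝ
  rw [fderiv_norm_sq_comp_apply hfR, fderiv_norm_sq_comp_apply hfR,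
    hf.differentiableAt.fderiv_real_apply, hf.differentiableAt.fderiv_real_apply, one_mul]
  linear_combination 4 * Complex.inner_sq_add_inner_I_mul_sq (f z) (deriv f z)

theorem AnalyticAt.fderiv_fderiv_norm_sq_one_add_fderiv_fderiv_norm_sq_I (hf : AnalyticAt ℂ f z) :
    fderiv ℝ (fun w => fderiv ℝ (fun w => ‖f w‖ ^ 2) w 1) z 1 +
        fderiv ℝ (fun w => fderiv ℝ (fun w => ‖f w‖ ^ 2) w I) z I =
      4 * ‖deriv f z‖ ^ 2 := by
  have hf2 : ContDiffAt ℝ 2 f z := hf.contDiffAt.restrict_scalars ℝ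
  rw [fderiv_fderiv_norm_sq_apply hf2, fderiv_fderiv_norm_sq_apply hf2,
    hf.differentiableAt.fderiv_real_apply, hf.differentiableAt.fderiv_real_apply,
    hf.fderiv_fderiv_real_apply, hf.fderiv_fderiv_real_apply]
  simp only [one_mul, one_pow, norm_mul, norm_I, I_sq, neg_one_mul, inner_neg_right]
  ring

end Holomorphic

/-- If `f` is holomorphic on an open set `U ⊆ ℂ` with derivative `f′`, then
`α = (1 − |f|²)/(1 + |f|²)` satisfies `Δα = −(8|f′|²/(1+|f|²)²)·α` on `U`,
where `Δ` is the sum of second directional derivatives in the directions `1` and `i`. -/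
theorem laplacian_alpha_eigen
    (U : Set ℂ) (hU : IsOpen U) (f f' : ℂ → ℂ)
    (hf : ∀ z ∈ U, HasDerivAt f (f' z) z)
    (α : ℂ → ℝ)
    (hα : ∀ z : ℂ, α z = (1 - ‖f z‖ ^ 2) / (1 + ‖f z‖ ^ 2)) :
    ∀ z ∈ U,
      fderiv ℝ (fun w => fderiv ℝ α w 1) z 1
        + fderiv ℝ (fun w => fderiv ℝ α w Complex.I) z Complex.I
      = -(8 * ‖f' z‖ ^ 2 / (1 + ‖f z‖ ^ 2) ^ 2) * α z := by
  intro z hz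
  have hfz : AnalyticAt ℂ f z :=
    DifferentiableOn.analyticOnNhd (fun w hw => (hf w hw).differentiableAt.differentiableWithinAt)
      hU z hz
  obtain rfl : α = (fun s => (1 - s) / (1 + s)) ∘ fun w => ‖f w‖ ^ 2 := funext hα
  set u := fun w => ‖f w‖ ^ 2
  have hu : ContDiffAt ℝ 2 u z :=
    (contDiff_norm_sq ℝ).contDiffAt.comp z (hfz.contDiffAt.restrict_scalars ℝ)
  have hpos : 0 < 1 + u z := by positivity
  have hφ : ∀ᶠ s in 𝓝 (u z), HasDerivAt (fun s => (1 - s) / (1 + s)) (-2 / (1 + s) ^ 2) s := by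
    filter_upwards [eventually_gt_nhds (show -1 < u z by linarith)] with s hs
    exact hasDerivAt_one_sub_div_one_add (by linarith)
  have hφ' := hasDerivAt_neg_two_div_one_add_sq hpos.ne'
  rw [fderiv_fderiv_comp_apply hu hφ hφ', fderiv_fderiv_comp_apply hu hφ hφ', ← (hf z hz).deriv]
  calc _ = 4 / (1 + u z) ^ 3 * (fderiv ℝ u z 1 ^ 2 + fderiv ℝ u z I ^ 2)
        - 2 / (1 + u z) ^ 2 * (fderiv ℝ (fun w => fderiv ℝ u w 1) z 1
          + fderiv ℝ (fun w => fderiv ℝ u w I) z I) := by ring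
    _ = 4 / (1 + u z) ^ 3 * (4 * u z * ‖deriv f z‖ ^ 2)
        - 2 / (1 + u z) ^ 2 * (4 * ‖deriv f z‖ ^ 2) := by
      rw [hfz.fderiv_norm_sq_one_sq_add_fderiv_norm_sq_I_sq,
        hfz.fderiv_fderiv_norm_sq_one_add_fderiv_fderiv_norm_sq_I]
    _ = _ := by
      simp only [Function.comp_apply]
      field_simp
      ring
end

section
/- Let U ⊆ ℂ be open and let f : ℂ → ℂ be holomorphic on U (complex differentiable at every point of U, with complex derivative f′). Define β : ℂ → ℝ by β(z) = 2·Re f(z)/(1 + |f(z)|²). Then for every z ∈ U, Δβ(z) = −(8|f′(z)|²/(1+|f(z)|²)²)·β(z), where Δ denotes the Euclidean Laplacian on ℂ ≅ ℝ², i.e. the sum of the second directional derivatives in the directions 1 and i. -/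
/-!
The Laplacian on `ℂ` is conformally covariant: for `f` holomorphic, `Δ (g ∘ f) = |f'|² (Δ g) ∘ f`.
Indeed the second derivative of `g ∘ f` in direction `e` is `D²g (e f') (e f') + Dg (e² f'')`;
summing over `e = 1, i` cancels the `f''` terms, and since `D²g` is symmetric the remaining terms
add up to `|f'|² (D²g (1, 1) + D²g (i, i))`. So it suffices to treat `f = id`, i.e. to check by
direct computation that `2 Re w / (1 + |w|²)` has Laplacian `-8 / (1 + |w|²)²` times itself.
-/

open Complex InnerProductSpace Laplacian Filter Topology

theorem fderiv_fderiv_apply {𝕜 E F : Type*} [NontriviallyNormedField 𝕜] [NormedAddCommGroup E]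
    [NormedSpace 𝕜 E] [NormedAddCommGroup F] [NormedSpace 𝕜 F] {h : E → F} {z : E}
    (hh : DifferentiableAt 𝕜 (fderiv 𝕜 h) z) (v w : E) :
    fderiv 𝕜 (fun y => fderiv 𝕜 h y v) z w = fderiv 𝕜 (fderiv 𝕜 h) z w v := by
  simp [fderiv_clm_apply hh (differentiableAt_const v)]

section ComplexPlane

variable {F : Type*} [NormedAddCommGroup F] [NormedSpace ℝ F]

theorem laplacian_complexPlane_eq_fderiv_fderiv (h : ℂ → F) (z : ℂ) :
    Δ h z = fderiv ℝ (fderiv ℝ h) z 1 1 + fderiv ℝ (fderiv ℝ h) z I I := by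
  simp [laplacian_eq_iteratedFDeriv_complexPlane, iteratedFDeriv_two_apply]

theorem ContDiffAt.laplacian_complexPlane_eq {h : ℂ → F} {z : ℂ} (hh : ContDiffAt ℝ 2 h z) :
    Δ h z = fderiv ℝ (fun w => fderiv ℝ h w 1) z 1 + fderiv ℝ (fun w => fderiv ℝ h w I) z I := by
  have hD := (hh.fderiv_right (m := 1) (by norm_num)).differentiableAt one_ne_zero
  rw [laplacian_complexPlane_eq_fderiv_fderiv, fderiv_fderiv_apply hD, fderiv_fderiv_apply hD]

theorem ContinuousLinearMap.apply_self_add_apply_I_mul_self (B : ℂ →L[ℝ] ℂ →L[ℝ] F)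
    (hB : ∀ v w, B v w = B w v) (a : ℂ) :
    B a a + B (I * a) (I * a) = ‖a‖ ^ 2 • (B 1 1 + B I I) := by
  obtain ⟨x, y, rfl⟩ : ∃ x y : ℝ, a = x • (1 : ℂ) + y • I := ⟨a.re, a.im, by simp⟩
  have hIa : I * (x • (1 : ℂ) + y • I) = (-y) • (1 : ℂ) + x • I := by simp [Complex.ext_iff]
  have hnorm : ‖x • (1 : ℂ) + y • I‖ ^ 2 = x ^ 2 + y ^ 2 := by
    simp [Complex.sq_norm, Complex.normSq_apply]; ring
  rw [hIa, hnorm]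
  simp only [map_add, map_smul, add_apply, smul_apply, hB I 1]
  module

theorem fderiv_fderiv_comp_apply_of_analyticAt {g : ℂ → F} {f : ℂ → ℂ} {z : ℂ}
    (hg : ContDiffAt ℝ 2 g (f z)) (hf : AnalyticAt ℂ f z) (e : ℂ) :
    fderiv ℝ (fun w => fderiv ℝ (g ∘ f) w e) z e =
      fderiv ℝ (fderiv ℝ g) (f z) (e * deriv f z) (e * deriv f z)
        + fderiv ℝ g (f z) (e * (e * deriv (deriv f) z)) := by
  have hfR : ∀ w, DifferentiableAt ℂ f w → fderiv ℝ f w e = e * deriv f w := fun w hw => by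
    simp [hw.fderiv_restrictScalars ℝ, fderiv_eq_smul_deriv]
  have hfg : (fun w => fderiv ℝ (g ∘ f) w e) =ᶠ[𝓝 z]
      fun w => fderiv ℝ g (f w) (e * deriv f w) := by
    have hg' : ∀ᶠ w in 𝓝 z, DifferentiableAt ℝ g (f w) := hf.continuousAt.eventually
      ((hg.eventually (by simp)).mono fun y hy => hy.differentiableAt two_ne_zero)
    filter_upwards [hg', hf.eventually_analyticAt] with w hgw hfw
    rw [fderiv_comp w hgw (hfw.differentiableAt.restrictScalars ℝ),
      ContinuousLinearMap.comp_apply, hfR w hfw.differentiableAt]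
  have hDg : HasFDerivAt (fun w => fderiv ℝ g (f w))
      ((fderiv ℝ (fderiv ℝ g) (f z)).comp (fderiv ℝ f z)) z :=
    ((hg.fderiv_right (m := 1) (by norm_num)).differentiableAt one_ne_zero).hasFDerivAt.comp z
      (hf.differentiableAt.restrictScalars ℝ).hasFDerivAt
  have hDf := (hf.deriv.differentiableAt.hasDerivAt.const_mul e).hasFDerivAt.restrictScalars ℝ
  rw [hfg.fderiv_eq, (hDg.clm_apply hDf).fderiv]
  simpa [hfR z hf.differentiableAt] using add_comm _ _

theorem laplacian_comp_analyticAt {g : ℂ → F} {f : ℂ → ℂ} {z : ℂ}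
    (hg : ContDiffAt ℝ 2 g (f z)) (hf : AnalyticAt ℂ f z) :
    Δ (g ∘ f) z = ‖deriv f z‖ ^ 2 • Δ g (f z) := by
  rw [(hg.comp z (hf.contDiffAt.restrict_scalars ℝ)).laplacian_complexPlane_eq,
    fderiv_fderiv_comp_apply_of_analyticAt hg hf, fderiv_fderiv_comp_apply_of_analyticAt hg hf,
    laplacian_complexPlane_eq_fderiv_fderiv,
    ← ContinuousLinearMap.apply_self_add_apply_I_mul_self _ (hg.isSymmSndFDerivAt (by simp))]
  simp only [one_mul, ← mul_assoc, I_mul_I, neg_one_mul, map_neg]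
  abel

end ComplexPlane

/-- The `β`-coordinate of the inverse stereographic projection `ℂ → S²`. -/
noncomputable def invStereoBeta (w : ℂ) : ℝ := 2 * w.re / (1 + ‖w‖ ^ 2)

theorem contDiff_invStereoBeta : ContDiff ℝ 2 invStereoBeta :=
  (contDiff_const.mul reCLM.contDiff).div (contDiff_const.add (contDiff_norm_sq ℝ))
    fun w => by positivity

theorem fderiv_invStereoBeta_apply (w e : ℂ) :
    fderiv ℝ invStereoBeta w e =
      (2 * e.re * (1 + ‖w‖ ^ 2) - 4 * w.re * (w.re * e.re + w.im * e.im)) / (1 + ‖w‖ ^ 2) ^ 2 := by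
  have hN : 1 + ‖w‖ ^ 2 ≠ 0 := by positivity
  have h := (reCLM.hasFDerivAt.const_mul (2 : ℝ)).fun_mul
    ((hasDerivAt_inv hN).comp_hasFDerivAt w ((hasFDerivAt_id w).norm_sq.const_add 1))
  simp only [id, Function.comp_def, ← div_eq_mul_inv, reCLM_apply] at h
  rw [HasFDerivAt.fderiv (f := invStereoBeta) h]
  simp only [ContinuousLinearMap.comp_id, neg_smul, smul_neg, add_apply, neg_apply, smul_apply,
    coe_innerSL_apply, Complex.inner, mul_re, conj_re, conj_im, mul_neg, sub_neg_eq_add, smul_add,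
    nsmul_eq_mul, Nat.cast_ofNat, smul_eq_mul, reCLM_apply]
  field_simp
  ring

theorem laplacian_invStereoBeta (w : ℂ) :
    Δ invStereoBeta w = -(8 / (1 + ‖w‖ ^ 2) ^ 2) * invStereoBeta w := by
  have hN : (1 + ‖w‖ ^ 2) ^ 2 ≠ 0 := by positivity
  have hnorm := (hasFDerivAt_id w).norm_sq.const_add (1 : ℝ)
  have hD (e : ℂ) := ((hnorm.const_mul (2 * e.re)).fun_sub
    ((reCLM.hasFDerivAt.const_mul (4 : ℝ)).fun_mul
      ((reCLM.hasFDerivAt.mul_const e.re).fun_add (imCLM.hasFDerivAt.mul_const e.im)))).fun_mul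
    ((hasDerivAt_inv hN).comp_hasFDerivAt w (hnorm.pow 2))
  simp only [id, Function.comp_def, ← div_eq_mul_inv, reCLM_apply, imCLM_apply] at hD
  rw [contDiff_invStereoBeta.contDiffAt.laplacian_complexPlane_eq]
  simp only [fderiv_invStereoBeta_apply]
  rw [(hD 1).fderiv, (hD I).fderiv]
  simp only [one_re, mul_one, Complex.sq_norm, normSq_apply, one_im, mul_zero, add_zero,
    Nat.add_one_sub_one, pow_one, smul_add, nsmul_eq_mul, Nat.cast_ofNat,
    ContinuousLinearMap.comp_id, neg_smul, smul_neg, one_smul, zero_smul, add_apply, neg_apply,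
    smul_apply, coe_innerSL_apply, Complex.inner, one_mul, conj_re, smul_eq_mul, sub_apply,
    reCLM_apply, I_re, zero_mul, I_im, zero_add, zero_sub, neg_neg, neg_add_rev, mul_re, conj_im,
    mul_neg, sub_neg_eq_add, neg_zero, imCLM_apply, invStereoBeta, neg_mul]
  field_simp
  ring

/-- If `f` is holomorphic on an open set `U ⊆ ℂ` with derivative `f′`, then
`β = 2·Re f/(1 + |f|²)` satisfies `Δβ = −(8|f′|²/(1+|f|²)²)·β` on `U`,
where `Δ` is the sum of second directional derivatives in the directions `1` and `i`. -/
theorem laplacian_beta_eigen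
    (U : Set ℂ) (hU : IsOpen U) (f f' : ℂ → ℂ)
    (hf : ∀ z ∈ U, HasDerivAt f (f' z) z)
    (β : ℂ → ℝ)
    (hβ : ∀ z : ℂ, β z = 2 * (f z).re / (1 + ‖f z‖ ^ 2)) :
    ∀ z ∈ U,
      fderiv ℝ (fun w => fderiv ℝ β w 1) z 1
        + fderiv ℝ (fun w => fderiv ℝ β w Complex.I) z Complex.I
      = -(8 * ‖f' z‖ ^ 2 / (1 + ‖f z‖ ^ 2) ^ 2) * β z := by
  intro z hz
  have hfz : AnalyticAt ℂ f z :=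
    DifferentiableOn.analyticAt (fun w hw => (hf w hw).differentiableAt.differentiableWithinAt)
      (hU.mem_nhds hz)
  have hβf : β = invStereoBeta ∘ f := funext hβ
  have hβz : ContDiffAt ℝ 2 β z :=
    hβf ▸ contDiff_invStereoBeta.contDiffAt.comp z (hfz.contDiffAt.restrict_scalars ℝ)
  rw [← hβz.laplacian_complexPlane_eq, hβf,
    laplacian_comp_analyticAt contDiff_invStereoBeta.contDiffAt hfz, laplacian_invStereoBeta,
    (hf z hz).deriv, smul_eq_mul, Function.comp_apply]
  ring
end

section
/- Let U ⊆ ℂ be open and let f : ℂ → ℂ be holomorphic on U (complex differentiable at every point of U, with complex derivative f′). Define γ : ℂ → ℝ by γ(z) = 2·Im f(z)/(1 + |f(z)|²). Then for every z ∈ U, Δγ(z) = −(8|f′(z)|²/(1+|f(z)|²)²)·γ(z), where Δ denotes the Euclidean Laplacian on ℂ ≅ ℝ², i.e. the sum of the second directional derivatives in the directions 1 and i. -/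
/-!
Write `γ = G ∘ f` with `G w = 2 Im w / (1 + |w|²)`, a coordinate of the inverse stereographic
projection. The Laplacian is conformally invariant: for holomorphic `f`,
`Δ (G ∘ f) = |f'|² (Δ G) ∘ f`, because the Hessian of `G` is evaluated on the orthogonal pair
`f' · 1`, `f' · i` of common length `|f'|`, while the terms involving `f''` cancel as
`1² + i² = 0`. It remains to check by direct computation that `G` is an eigenfunction,
`Δ G = -8 G / (1 + |w|²)²`.
-/

open Complex InnerProductSpace Laplacian ContinuousLinearMap Filter Topology

section SecondDerivatives

variable {E F G : Type*} [NormedAddCommGroup E] [NormedSpace ℝ E] [NormedAddCommGroup F]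
  [NormedSpace ℝ F] [NormedAddCommGroup G] [NormedSpace ℝ G]

theorem fderiv_clm_apply_const {c : E → G →L[ℝ] F} {x : E} (hc : DifferentiableAt ℝ c x)
    (u : E) (v : G) : fderiv ℝ (fun y => c y v) x u = fderiv ℝ c x u v := by
  simp [fderiv_clm_apply hc (differentiableAt_const v)]

theorem laplacian_eq_fderiv_fderiv_complexPlane (g : ℂ → F) (z : ℂ) :
    Δ g z = fderiv ℝ (fderiv ℝ g) z 1 1 + fderiv ℝ (fderiv ℝ g) z I I := by
  simp [laplacian_eq_iteratedFDeriv_complexPlane, iteratedFDeriv_two_apply]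

theorem ContDiffAt.laplacian_eq_fderiv_fderiv_apply {g : ℂ → F} {z : ℂ}
    (hg : ContDiffAt ℝ 2 g z) :
    Δ g z = fderiv ℝ (fun w => fderiv ℝ g w 1) z 1 + fderiv ℝ (fun w => fderiv ℝ g w I) z I := by
  have hDg : DifferentiableAt ℝ (fderiv ℝ g) z :=
    (hg.fderiv_right (m := 1) le_rfl).differentiableAt one_ne_zero
  rw [laplacian_eq_fderiv_fderiv_complexPlane, fderiv_clm_apply_const hDg,
    fderiv_clm_apply_const hDg]

end SecondDerivatives

section ConformalInvariance

variable {F : Type*} [NormedAddCommGroup F] [NormedSpace ℝ F]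

theorem ContinuousLinearMap.apply_self_add_apply_mul_I_self {B : ℂ →L[ℝ] ℂ →L[ℝ] F}
    (hB : ∀ v w, B v w = B w v) (c : ℂ) :
    B c c + B (c * I) (c * I) = ‖c‖ ^ 2 • (B 1 1 + B I I) := by
  obtain ⟨x, y, rfl⟩ : ∃ x y : ℝ, c = x • (1 : ℂ) + y • I := ⟨c.re, c.im, by simp⟩
  have hmulI : (x • (1 : ℂ) + y • I) * I = x • I - y • (1 : ℂ) := by
    simp [Complex.ext_iff]
  have hnorm : ‖x • (1 : ℂ) + y • I‖ ^ 2 = x ^ 2 + y ^ 2 := by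
    simp [Complex.sq_norm, normSq_add_mul_I]
  rw [hmulI, hnorm]
  simp only [map_add, map_sub, map_smul, add_apply, sub_apply, smul_apply, hB 1 I]
  module

theorem AnalyticAt.fderiv_fderiv_comp_apply_self {f : ℂ → ℂ} {g : ℂ → F} {z : ℂ}
    (hf : AnalyticAt ℂ f z) (hg : ContDiffAt ℝ 2 g (f z)) (e : ℂ) :
    fderiv ℝ (fun w => fderiv ℝ (g ∘ f) w e) z e =
      fderiv ℝ (fderiv ℝ g) (f z) (deriv f z * e) (deriv f z * e)
        + fderiv ℝ g (f z) (deriv (deriv f) z * e * e) := by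
  have hg_near : ∀ᶠ w in 𝓝 z, DifferentiableAt ℝ g (f w) :=
    hf.continuousAt.eventually ((hg.eventually (by simp)).mono fun _ h =>
      h.differentiableAt two_ne_zero)
  have hfirst : (fun w => fderiv ℝ (g ∘ f) w e) =ᶠ[𝓝 z]
      fun w => fderiv ℝ g (f w) (deriv f w * e) := by
    filter_upwards [hg_near, hf.eventually_analyticAt] with w hgw hfw
    rw [fderiv_comp w hgw (hfw.differentiableAt.restrictScalars ℝ)]
    simp [hfw.differentiableAt.fderiv_restrictScalars ℝ, mul_comm]
  have hDg : HasFDerivAt (fun w => fderiv ℝ g (f w))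
      ((fderiv ℝ (fderiv ℝ g) (f z)).comp
        ((toSpanSingleton ℂ (deriv f z)).restrictScalars ℝ)) z :=
    ((hg.fderiv_right (m := 1) le_rfl).differentiableAt one_ne_zero).hasFDerivAt.comp z
      (hf.differentiableAt.hasDerivAt.hasFDerivAt.restrictScalars ℝ)
  have hDf : HasFDerivAt (fun w => deriv f w * e)
      ((toSpanSingleton ℂ (deriv (deriv f) z * e)).restrictScalars ℝ) z :=
    ((hf.deriv.differentiableAt.hasDerivAt.mul_const e).hasFDerivAt).restrictScalars ℝ
  rw [hfirst.fderiv_eq, (hDg.clm_apply hDf).fderiv]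
  simp only [add_apply, comp_apply, flip_apply, coe_restrictScalars', toSpanSingleton_apply,
    smul_eq_mul]
  rw [add_comm, mul_comm e, mul_comm e]

theorem AnalyticAt.laplacian_comp {f : ℂ → ℂ} {g : ℂ → F} {z : ℂ}
    (hf : AnalyticAt ℂ f z) (hg : ContDiffAt ℝ 2 g (f z)) :
    Δ (g ∘ f) z = ‖deriv f z‖ ^ 2 • Δ g (f z) := by
  have hgf : ContDiffAt ℝ 2 (g ∘ f) z := hg.comp z (hf.contDiffAt.restrict_scalars ℝ)
  have hsymm : ∀ v w, fderiv ℝ (fderiv ℝ g) (f z) v w = fderiv ℝ (fderiv ℝ g) (f z) w v :=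
    hg.isSymmSndFDerivAt (by simp)
  have hcancel : fderiv ℝ g (f z) (deriv (deriv f) z * 1 * 1)
      + fderiv ℝ g (f z) (deriv (deriv f) z * I * I) = 0 := by
    rw [← map_add, mul_assoc _ I I, I_mul_I]
    simp
  rw [hgf.laplacian_eq_fderiv_fderiv_apply, hf.fderiv_fderiv_comp_apply_self hg,
    hf.fderiv_fderiv_comp_apply_self hg, add_add_add_comm, hcancel, add_zero, mul_one,
    apply_self_add_apply_mul_I_self hsymm, laplacian_eq_fderiv_fderiv_complexPlane]

end ConformalInvariance

theorem hasFDerivAt_inv_one_add_norm_sq {E : Type*} [NormedAddCommGroup E]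
    [InnerProductSpace ℝ E] (v : E) :
    HasFDerivAt (fun v : E => (1 + ‖v‖ ^ 2)⁻¹)
      ((-((1 + ‖v‖ ^ 2) ^ 2)⁻¹) • 2 • innerSL ℝ v) v :=
  (hasDerivAt_inv (x := (1 + ‖v‖ ^ 2 : ℝ)) (by positivity)).comp_hasFDerivAt v
    ((hasStrictFDerivAt_norm_sq v).hasFDerivAt.const_add 1)

/-- The third coordinate `γ` of the inverse stereographic projection `ℂ → S² ⊂ ℝ³`. -/
noncomputable def invStereoIm (w : ℂ) : ℝ := 2 * w.im / (1 + ‖w‖ ^ 2)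

theorem contDiff_invStereoIm : ContDiff ℝ 2 invStereoIm :=
  (contDiff_const.mul imCLM.contDiff).div (contDiff_const.add (contDiff_norm_sq ℝ))
    fun v => (by positivity : 1 + ‖v‖ ^ 2 ≠ 0)

theorem fderiv_invStereoIm_apply (v e : ℂ) :
    fderiv ℝ invStereoIm v e =
      2 * e.im * (1 + ‖v‖ ^ 2)⁻¹
        - 4 * v.im * (v.re * e.re + v.im * e.im) * ((1 + ‖v‖ ^ 2)⁻¹) ^ 2 := by
  have h : HasFDerivAt (fun v : ℂ => 2 * v.im * (1 + ‖v‖ ^ 2)⁻¹) _ v :=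
    (imCLM.hasFDerivAt.const_mul (2 : ℝ)).fun_mul (hasFDerivAt_inv_one_add_norm_sq v)
  have hG : invStereoIm = fun v => 2 * v.im * (1 + ‖v‖ ^ 2)⁻¹ := by
    funext v; rw [invStereoIm, div_eq_mul_inv]
  rw [hG, h.fderiv]
  simp only [imCLM_apply, neg_smul, smul_neg, add_apply, neg_apply, smul_apply, coe_innerSL_apply,
    Complex.inner, mul_re, conj_re, conj_im, mul_neg, sub_neg_eq_add, smul_add, nsmul_eq_mul,
    Nat.cast_ofNat, smul_eq_mul, inv_pow]
  ring

theorem fderiv_fderiv_invStereoIm_apply_self (w e : ℂ) :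
    fderiv ℝ (fun v => fderiv ℝ invStereoIm v e) w e =
      -8 * e.im * (w.re * e.re + w.im * e.im) * ((1 + ‖w‖ ^ 2)⁻¹) ^ 2
        - 4 * w.im * ‖e‖ ^ 2 * ((1 + ‖w‖ ^ 2)⁻¹) ^ 2
        + 16 * w.im * (w.re * e.re + w.im * e.im) ^ 2 * ((1 + ‖w‖ ^ 2)⁻¹) ^ 3 := by
  have hM := hasFDerivAt_inv_one_add_norm_sq w
  have hP : HasFDerivAt (fun v : ℂ => v.re * e.re + v.im * e.im)
      (e.re • reCLM + e.im • imCLM) w :=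
    (reCLM.hasFDerivAt.mul_const e.re).add (imCLM.hasFDerivAt.mul_const e.im)
  have h : HasFDerivAt (fun v : ℂ => 2 * e.im * (1 + ‖v‖ ^ 2)⁻¹
      - 4 * v.im * (v.re * e.re + v.im * e.im) * ((1 + ‖v‖ ^ 2)⁻¹) ^ 2) _ w :=
    (hM.const_mul _).sub (((imCLM.hasFDerivAt.const_mul (4 : ℝ)).fun_mul hP).fun_mul (hM.pow 2))
  simp_rw [fderiv_invStereoIm_apply]
  rw [h.fderiv]
  simp only [← inv_pow, neg_smul, smul_neg, imCLM_apply, Nat.add_one_sub_one, pow_one,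
    nsmul_eq_mul, Nat.cast_ofNat, smul_add, sub_apply, neg_apply, smul_apply, coe_innerSL_apply,
    Complex.inner, mul_re, conj_re, conj_im, mul_neg, sub_neg_eq_add, smul_eq_mul, add_apply,
    reCLM_apply, neg_mul, Complex.sq_norm e, normSq_apply e]
  ring

theorem laplacian_invStereoIm (w : ℂ) :
    Δ invStereoIm w = -(8 / (1 + ‖w‖ ^ 2) ^ 2) * invStereoIm w := by
  rw [contDiff_invStereoIm.contDiffAt.laplacian_eq_fderiv_fderiv_apply,
    fderiv_fderiv_invStereoIm_apply_self, fderiv_fderiv_invStereoIm_apply_self, invStereoIm]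
  have hN : 1 + ‖w‖ ^ 2 ≠ 0 := by positivity
  simp only [one_re, one_im, I_re, I_im, norm_one, norm_I]
  rw [Complex.sq_norm, normSq_apply] at hN ⊢
  field_simp
  ring

/-- If `f` is holomorphic on an open set `U ⊆ ℂ` with derivative `f′`, then
`γ = 2·Im f/(1 + |f|²)` satisfies `Δγ = −(8|f′|²/(1+|f|²)²)·γ` on `U`,
where `Δ` is the sum of second directional derivatives in the directions `1` and `i`. -/
theorem laplacian_gamma_eigen
    (U : Set ℂ) (hU : IsOpen U) (f f' : ℂ → ℂ)
    (hf : ∀ z ∈ U, HasDerivAt f (f' z) z)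
    (γ : ℂ → ℝ)
    (hγ : ∀ z : ℂ, γ z = 2 * (f z).im / (1 + ‖f z‖ ^ 2)) :
    ∀ z ∈ U,
      fderiv ℝ (fun w => fderiv ℝ γ w 1) z 1
        + fderiv ℝ (fun w => fderiv ℝ γ w Complex.I) z Complex.I
      = -(8 * ‖f' z‖ ^ 2 / (1 + ‖f z‖ ^ 2) ^ 2) * γ z := by
  intro z hz
  have hfz : AnalyticAt ℂ f z :=
    DifferentiableOn.analyticOnNhd (fun w hw => (hf w hw).differentiableAt.differentiableWithinAt)
      hU z hz
  have hγ_comp : γ = invStereoIm ∘ f := funext hγ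
  have hG : ContDiffAt ℝ 2 invStereoIm (f z) := contDiff_invStereoIm.contDiffAt
  have hγz : ContDiffAt ℝ 2 γ z := hγ_comp ▸ hG.comp z (hfz.contDiffAt.restrict_scalars ℝ)
  rw [← hγz.laplacian_eq_fderiv_fderiv_apply, hγ_comp, hfz.laplacian_comp hG,
    laplacian_invStereoIm, (hf z hz).deriv]
  simp only [Function.comp_apply, smul_eq_mul]
  ring
end

section
/- Let α′ > 0 and κ < 0 be fixed real numbers. Define x : ℝ → ℝ by x(u) = (u + √(u² − 2α′κ))/2 and g : ℝ → ℝ by g(u) = (1/2)·(x(u)² − α′κ·log x(u)). Then x(u) > 0 for all u, g is differentiable with g′(u) = x(u) for every u ∈ ℝ, and g is strictly convex on ℝ (equivalently, x is strictly increasing on ℝ). -/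
/-!
With `a = α′κ < 0` and `s(u) = √(u² − 2a) > |u|`, the function `x = (u + s)/2` is the positive
root of `X² − uX + a/2`, so `2x² − a = 2xs`. Since `s′ = u/s`, one gets `x′ = x/s > 0`, and then
`g′ = x′ (2x² − a)/(2x) = x′ s = x`; a function whose derivative is strictly increasing is
strictly convex.
-/

open Real

namespace PotentialConvexity

variable {a : ℝ}

/-- The larger root of `X² − uX + a/2`. -/
noncomputable def posRoot (a u : ℝ) : ℝ := (u + √(u ^ 2 - 2 * a)) / 2

noncomputable def potential (a u : ℝ) : ℝ := (1 / 2) * (posRoot a u ^ 2 - a * log (posRoot a u))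

theorem sqrt_sq_sub_two_mul_pos (ha : a < 0) (u : ℝ) : 0 < √(u ^ 2 - 2 * a) :=
  sqrt_pos.mpr (by linarith [sq_nonneg u])

theorem posRoot_pos (ha : a < 0) (u : ℝ) : 0 < posRoot a u := by
  have : -u < √(u ^ 2 - 2 * a) := lt_sqrt_of_sq_lt (by rw [neg_sq]; linarith)
  unfold posRoot
  linarith

theorem two_mul_posRoot_mul_sqrt (ha : a < 0) (u : ℝ) :
    2 * posRoot a u * √(u ^ 2 - 2 * a) = 2 * posRoot a u ^ 2 - a := by
  have hs : √(u ^ 2 - 2 * a) ^ 2 = u ^ 2 - 2 * a := sq_sqrt (by linarith [sq_nonneg u])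
  unfold posRoot
  linear_combination hs / 2

theorem hasDerivAt_posRoot (ha : a < 0) (u : ℝ) :
    HasDerivAt (posRoot a) (posRoot a u / √(u ^ 2 - 2 * a)) u := by
  have hs := (sqrt_sq_sub_two_mul_pos ha u).ne'
  have hsqrt : HasDerivAt (fun v => √(v ^ 2 - 2 * a)) (u / √(u ^ 2 - 2 * a)) u := by
    have := ((hasDerivAt_pow 2 u).sub_const (2 * a)).sqrt (by linarith [sq_nonneg u])
    convert this using 1
    field_simp
    ring
  have h : HasDerivAt (posRoot a) ((1 + u / √(u ^ 2 - 2 * a)) / 2) u :=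
    ((hasDerivAt_id u).add hsqrt).div_const 2
  convert h using 1
  unfold posRoot
  field_simp
  ring

theorem strictMono_posRoot (ha : a < 0) : StrictMono (posRoot a) :=
  strictMono_of_deriv_pos fun u => by
    rw [(hasDerivAt_posRoot ha u).deriv]
    exact div_pos (posRoot_pos ha u) (sqrt_sq_sub_two_mul_pos ha u)

theorem hasDerivAt_potential (ha : a < 0) (u : ℝ) :
    HasDerivAt (potential a) (posRoot a u) u := by
  have hx := (posRoot_pos ha u).ne'
  have hs := (sqrt_sq_sub_two_mul_pos ha u).ne'
  have hx' := hasDerivAt_posRoot ha u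
  refine (((hx'.pow 2).sub ((hx'.log hx).const_mul a)).const_mul (1 / 2)).congr_deriv ?_
  norm_num
  field_simp
  linear_combination -two_mul_posRoot_mul_sqrt ha u

theorem strictConvexOn_potential (ha : a < 0) : StrictConvexOn ℝ Set.univ (potential a) := by
  have hderiv : deriv (potential a) = posRoot a :=
    funext fun u => (hasDerivAt_potential ha u).deriv
  exact StrictMono.strictConvexOn_univ_of_deriv
    (continuous_iff_continuousAt.mpr fun u => (hasDerivAt_potential ha u).continuousAt)
    (hderiv ▸ strictMono_posRoot ha)

end PotentialConvexity

open PotentialConvexity in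
/-- For `α′ > 0` and `κ < 0`, with `x(u) = (u + √(u² − 2α′κ))/2` and
`g(u) = (1/2)(x(u)² − α′κ·log x(u))`, one has `x(u) > 0` everywhere,
`g` is differentiable with `g′ = x`, and `g` is strictly convex on `ℝ`. -/
theorem potential_strictly_convex
    (α' κ : ℝ) (hα : 0 < α') (hκ : κ < 0)
    (x g : ℝ → ℝ)
    (hx : ∀ u : ℝ, x u = (u + Real.sqrt (u ^ 2 - 2 * α' * κ)) / 2)
    (hg : ∀ u : ℝ, g u = (1 / 2) * ((x u) ^ 2 - α' * κ * Real.log (x u))) :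
    (∀ u : ℝ, 0 < x u) ∧ (∀ u : ℝ, HasDerivAt g (x u) u) ∧
      StrictConvexOn ℝ Set.univ g := by
  have ha : α' * κ < 0 := mul_neg_of_pos_of_neg hα hκ
  have hx_eq : x = posRoot (α' * κ) := funext fun u => by rw [hx, posRoot, mul_assoc]
  have hg_eq : g = potential (α' * κ) := funext fun u => by rw [hg, potential, hx_eq]
  subst hx_eq hg_eq
  exact ⟨posRoot_pos ha, hasDerivAt_potential ha, strictConvexOn_potential ha⟩
end

section
/- Let 0 < a < 1 be real. Then for every ζ ∈ ℂ one has 4|ζ⁸ − a⁸|/(1+|ζ|²)⁴ < 4, and the supremum over ζ ∈ ℂ of the quantity 4|ζ⁸ − a⁸|/(1+|ζ|²)⁴ equals 4. -/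
/-! The numerator is at most `|ζ|⁸ + a⁸ < |ζ|⁸ + 1 ≤ (1 + |ζ|²)⁴`, so the quotient stays below `4`;
as `|ζ| → ∞` it tends to `4`, which is therefore its supremum, never attained. -/

open Filter Topology Bornology

section

variable {𝕜 : Type*} [NormedDivisionRing 𝕜] {c : 𝕜} {n : ℕ}

theorem norm_pow_sub_div_lt_one (hc : ‖c‖ < 1) (hn : n ≠ 0) (z : 𝕜) :
    ‖z ^ (2 * n) - c‖ / (1 + ‖z‖ ^ 2) ^ n < 1 := by
  rw [div_lt_one (by positivity)]
  calc ‖z ^ (2 * n) - c‖ ≤ (‖z‖ ^ 2) ^ n + ‖c‖ := by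
        simpa only [norm_pow, pow_mul] using norm_sub_le (z ^ (2 * n)) c
    _ < (‖z‖ ^ 2) ^ n + 1 ^ n := by rw [one_pow]; gcongr
    _ ≤ (‖z‖ ^ 2 + 1) ^ n := pow_add_pow_le (by positivity) zero_le_one hn
    _ = (1 + ‖z‖ ^ 2) ^ n := by rw [add_comm]

theorem tendsto_pow_sub_div_one_add_sq_pow_atTop (hn : n ≠ 0) (k : ℝ) :
    Tendsto (fun r : ℝ => (r ^ (2 * n) - k) / (1 + r ^ 2) ^ n) atTop (𝓝 1) := by
  have hs : Tendsto (fun r : ℝ => 1 + r ^ 2) atTop atTop :=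
    tendsto_atTop_add_const_left _ _ (tendsto_pow_atTop two_ne_zero)
  -- with `s = 1 + r²` the quotient is `(1 - s⁻¹)ⁿ - k (s⁻¹)ⁿ`
  have hlim : Tendsto (fun s : ℝ => (1 - s⁻¹) ^ n - k * s⁻¹ ^ n) atTop (𝓝 1) := by
    have h := tendsto_inv_atTop_zero (𝕜 := ℝ)
    simpa [hn] using ((tendsto_const_nhds (x := (1 : ℝ)).sub h).pow n).sub
      (tendsto_const_nhds (x := k).mul (h.pow n))
  refine (hlim.comp hs).congr fun r => ?_
  have hr : 1 - (1 + r ^ 2)⁻¹ = r ^ 2 / (1 + r ^ 2) := by field_simp; ring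
  rw [Function.comp_apply, hr, div_pow, inv_pow, ← pow_mul, sub_div, div_eq_mul_inv k]

theorem tendsto_norm_pow_sub_div_cobounded (hc : ‖c‖ < 1) (hn : n ≠ 0) :
    Tendsto (fun z : 𝕜 => ‖z ^ (2 * n) - c‖ / (1 + ‖z‖ ^ 2) ^ n) (cobounded 𝕜) (𝓝 1) := by
  refine tendsto_of_tendsto_of_tendsto_of_le_of_le
    ((tendsto_pow_sub_div_one_add_sq_pow_atTop hn ‖c‖).comp tendsto_norm_cobounded_atTop)
    tendsto_const_nhds (fun z => ?_) (fun z => (norm_pow_sub_div_lt_one hc hn z).le)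
  dsimp only [Function.comp_apply]
  gcongr
  simpa only [norm_pow] using norm_sub_norm_le (z ^ (2 * n)) c

theorem iSup_norm_pow_sub_div_eq_one [NeBot (cobounded 𝕜)] (hc : ‖c‖ < 1) (hn : n ≠ 0) :
    ⨆ z : 𝕜, ‖z ^ (2 * n) - c‖ / (1 + ‖z‖ ^ 2) ^ n = 1 :=
  le_antisymm (ciSup_le fun z => (norm_pow_sub_div_lt_one hc hn z).le) <|
    le_of_tendsto' (tendsto_norm_pow_sub_div_cobounded hc hn) fun z =>
      le_ciSup ⟨1, Set.forall_mem_range.2 fun z => (norm_pow_sub_div_lt_one hc hn z).le⟩ z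

end

/-- For `0 < a < 1`, the quantity `4|ζ⁸ − a⁸|/(1+|ζ|²)⁴` (minus the Gauss curvature of the
canonical metric on the genus 3 example) is everywhere strictly less than `4`, and its
supremum over `ζ ∈ ℂ` equals `4`. -/
theorem neg_curvature_lt_four_and_sup_eq_four
    (a : ℝ) (ha0 : 0 < a) (ha1 : a < 1) :
    (∀ ζ : ℂ, 4 * ‖ζ ^ 8 - (a : ℂ) ^ 8‖ / (1 + ‖ζ‖ ^ 2) ^ 4 < 4) ∧
    (⨆ ζ : ℂ, 4 * ‖ζ ^ 8 - (a : ℂ) ^ 8‖ / (1 + ‖ζ‖ ^ 2) ^ 4) = 4 := by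
  have hc : ‖(a : ℂ) ^ 8‖ < 1 := by
    rw [norm_pow, Complex.norm_real, Real.norm_of_nonneg ha0.le]
    exact pow_lt_one₀ ha0.le ha1 (by norm_num)
  simp only [mul_div_assoc, show 8 = 2 * 4 from rfl]
  refine ⟨fun ζ => ?_, ?_⟩
  · linarith [norm_pow_sub_div_lt_one hc four_ne_zero ζ]
  · rw [← Real.mul_iSup_of_nonneg zero_le_four, iSup_norm_pow_sub_div_eq_one hc four_ne_zero,
      mul_one]
end

section
/- Let t ∈ ℝ, α′ > 0, θ ∈ ℝ, and let s, a ∈ (0,1) be such that s⁴e^{iθ} ≠ a⁸. Then √(t²(1−s²)² + 8α′|s⁴e^{iθ} − a⁸|)/|s⁴e^{iθ} − a⁸| > √(t²(1−s²)² + 8α′|e^{iθ} − s⁴a⁸|)/|e^{iθ} − s⁴a⁸|. -/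
/-!
Write `A = |s⁴e^{iθ} − a⁸|` and `B = |e^{iθ} − s⁴a⁸|`. Expanding both squared moduli, the terms in
`cos θ` cancel and `B² − A² = (1 − s⁸)(1 − a¹⁶) > 0`, so `0 < A < B`. The inequality then says that
`x ↦ √(c + k x) / x = √(c / x² + k / x)` is strictly decreasing on `x > 0` when `c ≥ 0 < k`.
-/

open Set

lemma strictAntiOn_sqrt_add_mul_div {c k : ℝ} (hc : 0 ≤ c) (hk : 0 < k) :
    StrictAntiOn (fun x => Real.sqrt (c + k * x) / x) (Ioi 0) := by
  intro A (hA : 0 < A) B (hB : 0 < B) hAB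
  have hsqrt (x : ℝ) (hx : 0 < x) : Real.sqrt (c + k * x) / x = Real.sqrt (c / x ^ 2 + k / x) := by
    rw [← Real.sqrt_sq hx.le, ← Real.sqrt_div' _ (sq_nonneg x), Real.sqrt_sq hx.le]
    congr 1
    field_simp
  simp only [hsqrt A hA, hsqrt B hB]
  apply Real.sqrt_lt_sqrt (by positivity)
  have hc_div : c / B ^ 2 ≤ c / A ^ 2 := div_le_div_of_nonneg_left hc (by positivity)
    (pow_le_pow_left₀ hA.le hAB.le 2)
  have hk_div : k / B < k / A := div_lt_div_of_pos_left hk hA hAB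
  linarith

lemma Complex.norm_sub_mul_sq_sub_norm_mul_sub_sq (z : ℂ) (p q : ℝ) :
    ‖z - p * q‖ ^ 2 - ‖p * z - q‖ ^ 2 = (1 - p ^ 2) * (‖z‖ ^ 2 - q ^ 2) := by
  simp only [Complex.sq_norm, Complex.normSq_apply, Complex.sub_re, Complex.sub_im,
    Complex.mul_re, Complex.mul_im, Complex.ofReal_re, Complex.ofReal_im]
  ring

lemma Complex.norm_mul_sub_lt_norm_sub_mul {z : ℂ} (hz : ‖z‖ = 1) {p q : ℝ}
    (hp : |p| < 1) (hq : |q| < 1) : ‖p * z - q‖ < ‖z - p * q‖ := by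
  have hp2 : 0 < 1 - p ^ 2 := sub_pos.2 (sq_lt_one_iff_abs_lt_one p |>.2 hp)
  have hq2 : 0 < 1 - q ^ 2 := sub_pos.2 (sq_lt_one_iff_abs_lt_one q |>.2 hq)
  have hsq := norm_sub_mul_sq_sub_norm_mul_sub_sq z p q
  rw [hz, one_pow] at hsq
  exact lt_of_pow_lt_pow_left₀ 2 (norm_nonneg _) (by nlinarith [mul_pos hp2 hq2])

lemma abs_pow_lt_one_of_mem_Ioo {x : ℝ} (hx0 : 0 < x) (hx1 : x < 1) {n : ℕ} (hn : n ≠ 0) :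
    |x ^ n| < 1 := by
  rw [abs_of_pos (pow_pos hx0 n)]
  exact pow_lt_one₀ hx0.le hx1 hn

/-- The pointwise inequality between the two terms in the second double integral of the
genus 3 example: for `t ∈ ℝ`, `α′ > 0`, `θ ∈ ℝ`, and `s, a ∈ (0,1)` with `s⁴e^{iθ} ≠ a⁸`,
`√(t²(1−s²)² + 8α′|s⁴e^{iθ} − a⁸|)/|s⁴e^{iθ} − a⁸|
  > √(t²(1−s²)² + 8α′|e^{iθ} − s⁴a⁸|)/|e^{iθ} − s⁴a⁸|`. -/
theorem genus_three_pointwise_inequality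
    (t α' θ s a : ℝ) (hα : 0 < α')
    (hs0 : 0 < s) (hs1 : s < 1) (ha0 : 0 < a) (ha1 : a < 1)
    (hne : (s : ℂ) ^ 4 * Complex.exp (θ * Complex.I) ≠ (a : ℂ) ^ 8) :
    Real.sqrt (t ^ 2 * (1 - s ^ 2) ^ 2
          + 8 * α' * ‖(s : ℂ) ^ 4 * Complex.exp (θ * Complex.I) - (a : ℂ) ^ 8‖)
        / ‖(s : ℂ) ^ 4 * Complex.exp (θ * Complex.I) - (a : ℂ) ^ 8‖
      > Real.sqrt (t ^ 2 * (1 - s ^ 2) ^ 2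
          + 8 * α' * ‖Complex.exp (θ * Complex.I) - (s : ℂ) ^ 4 * (a : ℂ) ^ 8‖)
        / ‖Complex.exp (θ * Complex.I) - (s : ℂ) ^ 4 * (a : ℂ) ^ 8‖ := by
  have hA : 0 < ‖(s : ℂ) ^ 4 * Complex.exp (θ * Complex.I) - (a : ℂ) ^ 8‖ :=
    norm_pos_iff.2 (sub_ne_zero.2 hne)
  have hAB : ‖(s : ℂ) ^ 4 * Complex.exp (θ * Complex.I) - (a : ℂ) ^ 8‖
      < ‖Complex.exp (θ * Complex.I) - (s : ℂ) ^ 4 * (a : ℂ) ^ 8‖ := by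
    simpa only [Complex.ofReal_pow] using
      Complex.norm_mul_sub_lt_norm_sub_mul (Complex.norm_exp_ofReal_mul_I θ)
        (abs_pow_lt_one_of_mem_Ioo hs0 hs1 (n := 4) (by norm_num))
        (abs_pow_lt_one_of_mem_Ioo ha0 ha1 (n := 8) (by norm_num))
  exact strictAntiOn_sqrt_add_mul_div (by positivity) (by positivity : 0 < 8 * α')
    hA (hA.trans hAB) hAB
end

section
/- Let 0 < a < 1, α′ > 0, and t ∈ ℝ. For ζ ∈ ℂ define E(ζ) = t(1−|ζ|²) + √(t²(1−|ζ|²)² + 8α′|ζ⁸ − a⁸|/(1+|ζ|²)²). Then the functions ζ ↦ Re(ζ)·E(ζ)/|ζ⁸ − a⁸| and ζ ↦ Im(ζ)·E(ζ)/|ζ⁸ − a⁸| (defined away from the eight zeros of ζ⁸ − a⁸, extended arbitrarily there) are Lebesgue integrable on ℂ, and both of their integrals over ℂ with respect to Lebesgue measure vanish. -/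
/-!
Near each of its eight simple zeros `z`, `|ζ⁸ - a⁸|` is comparable to `|ζ - z|`, and `1/|ζ - z|`
is locally integrable in real dimension two. At infinity `E(ζ) = O(|ζ|²)`, so the integrands are
`O(|ζ|⁻⁵)`. Both integrands are odd under `ζ ↦ -ζ`, since `E` is even while `Re` and `Im` are odd,
and Lebesgue measure is invariant under negation, so their integrals vanish.
-/

open MeasureTheory Filter Asymptotics Topology Polynomial

section Translation

variable {G F : Type*} [AddGroup G] [TopologicalSpace G] [IsTopologicalAddGroup G]
  [MeasurableSpace G] [MeasurableAdd G] {μ : Measure G} [μ.IsAddRightInvariant]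
  [NormedAddCommGroup F]

theorem MeasureTheory.LocallyIntegrable.comp_sub_right {f : G → F} (hf : LocallyIntegrable f μ)
    (z : G) : LocallyIntegrable (fun x => f (x - z)) μ := by
  intro x
  obtain ⟨s, hs, hfs⟩ := hf (x - z)
  refine ⟨(· - z) ⁻¹' s, (continuous_sub_right z).continuousAt.preimage_mem_nhds hs, ?_⟩
  exact ((measurePreserving_sub_right μ z).integrableOn_comp_preimage
    (MeasurableEquiv.subRight z).measurableEmbedding).2 hfs

end Translation

section Decay

variable {E : Type*} [NormedAddCommGroup E] [NormedSpace ℝ E] [FiniteDimensional ℝ E]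
  [MeasurableSpace E] [BorelSpace E] {μ : Measure E} [μ.IsAddHaarMeasure]

theorem locallyIntegrable_inv_norm_sub (hE : 1 < Module.finrank ℝ E) (z : E) :
    LocallyIntegrable (fun x => ‖x - z‖⁻¹) μ := by
  have h₀ : LocallyIntegrable (fun x : E => ‖x‖⁻¹) μ :=
    locallyIntegrable_of_norm_le_rpow (C := 1) (α := 1) hE.le (by exact_mod_cast hE)
      (ae_of_all _ fun x => by simp [Real.rpow_neg_one]) (by fun_prop)
  exact h₀.comp_sub_right z

theorem integrableAtFilter_rpow_norm_cocompact {r : ℝ} (hr : r < -Module.finrank ℝ E) :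
    IntegrableAtFilter (fun x => ‖x‖ ^ r) (cocompact E) μ := by
  have hint : Integrable (fun x : E => (1 + ‖x‖) ^ r) μ := by
    simpa using integrable_one_add_norm (μ := μ) (r := -r) (by linarith)
  have hmeas : Measurable fun x : E => ‖x‖ ^ r := by fun_prop
  refine IsBigO.integrableAtFilter ?_ hmeas.aestronglyMeasurable.stronglyMeasurableAtFilter
    (hint.integrableAtFilter _)
  refine IsBigO.of_bound ((2 : ℝ) ^ (-r)) ?_
  filter_upwards [tendsto_norm_cocompact_atTop.eventually_ge_atTop 1] with x hx
  have hr0 : r ≤ 0 := by linarith [(Module.finrank ℝ E).cast_nonneg (α := ℝ)]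
  have h2x : (1 + ‖x‖) ^ r ≥ (2 * ‖x‖) ^ r :=
    Real.rpow_le_rpow_of_nonpos (by positivity) (by linarith) hr0
  rw [Real.mul_rpow zero_le_two (norm_nonneg x)] at h2x
  rw [Real.norm_of_nonneg (by positivity), Real.norm_of_nonneg (by positivity)]
  calc ‖x‖ ^ r = 2 ^ (-r) * (2 ^ r * ‖x‖ ^ r) := by
        rw [← mul_assoc, ← Real.rpow_add zero_lt_two, neg_add_cancel, Real.rpow_zero, one_mul]
    _ ≤ 2 ^ (-r) * (1 + ‖x‖) ^ r := by gcongr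

end Decay

namespace Polynomial

theorem Separable.eval_divByMonic_X_sub_C_ne_zero {K : Type*} [Field K] {p : K[X]}
    (hp : p.Separable) {z : K}
    (hz : p.IsRoot z) : (p /ₘ (X - C z)).eval z ≠ 0 := by
  have hfac := mul_divByMonic_eq_iff_isRoot.2 hz
  have hder := hp.aeval_derivative_ne_zero (x := z) (by simpa [aeval_def] using hz)
  rw [← hfac] at hder
  simpa [aeval_def, derivative_mul] using hder

theorem locallyIntegrable_inv_norm_eval {p : ℂ[X]} (hp : p.Separable) :
    LocallyIntegrable (fun ζ => ‖p.eval ζ‖⁻¹) := by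
  intro z
  have hmeas : StronglyMeasurableAtFilter (fun ζ => ‖p.eval ζ‖⁻¹) (𝓝 z) :=
    (by fun_prop : Measurable fun ζ => ‖p.eval ζ‖⁻¹).aestronglyMeasurable
      |>.stronglyMeasurableAtFilter
  by_cases hz : p.IsRoot z
  · set q := p /ₘ (X - C z)
    have hq := hp.eval_divByMonic_X_sub_C_ne_zero hz
    have hsplit : (fun ζ => ‖p.eval ζ‖⁻¹) = fun ζ => ‖ζ - z‖⁻¹ * ‖q.eval ζ‖⁻¹ := by
      ext ζ
      conv_lhs => rw [← mul_divByMonic_eq_iff_isRoot.2 hz]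
      simp [q, mul_comm]
    have hbound : (fun ζ => ‖q.eval ζ‖⁻¹) =O[𝓝 z] fun _ => (1 : ℝ) :=
      ((q.continuous.norm.tendsto z).inv₀ (norm_ne_zero_iff.2 hq)).isBigO_one ℝ
    have hO : (fun ζ => ‖p.eval ζ‖⁻¹) =O[𝓝 z] fun ζ => ‖ζ - z‖⁻¹ := by
      simpa [hsplit] using (isBigO_refl (fun ζ => ‖ζ - z‖⁻¹) (𝓝 z)).mul hbound
    exact hO.integrableAtFilter hmeas
      (locallyIntegrable_inv_norm_sub (by simp) z z)
  · have hO : (fun ζ => ‖p.eval ζ‖⁻¹) =O[𝓝 z] fun _ => (1 : ℝ) :=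
      ((p.continuous.norm.tendsto z).inv₀ (norm_ne_zero_iff.2 hz)).isBigO_one ℝ
    exact hO.integrableAtFilter hmeas (continuous_const.locallyIntegrable z)

theorem isBigO_inv_norm_eval_cobounded {R : Type*} [NormedField R] (p : R[X]) :
    (fun x => ‖p.eval x‖⁻¹) =O[Bornology.cobounded R] fun x => (‖x‖ ^ p.natDegree)⁻¹ := by
  have h := isEquivalent_cobounded_leading_monomial (P := p) |>.inv.isBigO
  simpa using (h.trans ((isBigO_refl (fun x : R => (x ^ p.natDegree)⁻¹) _).const_mul_left
    p.leadingCoeff⁻¹ |>.congr_left fun x => by simp [mul_comm])).norm_norm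

theorem integrable_norm_pow_mul_inv_norm_eval {p : ℂ[X]} (hp : p.Separable) {k : ℕ}
    (hk : k + 2 < p.natDegree) : Integrable fun ζ => ‖ζ‖ ^ k * ‖p.eval ζ‖⁻¹ := by
  have hO : (fun ζ => ‖ζ‖ ^ k * ‖p.eval ζ‖⁻¹) =O[cocompact ℂ]
      fun ζ => ‖ζ‖ ^ ((k : ℝ) - p.natDegree) := by
    refine ((isBigO_refl (fun ζ : ℂ => ‖ζ‖ ^ k) _).mul
      (Metric.cobounded_eq_cocompact (α := ℂ) ▸ isBigO_inv_norm_eval_cobounded p)).congr'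
      (.refl _ _) ?_
    filter_upwards [(isCompact_singleton (x := (0 : ℂ))).compl_mem_cocompact] with ζ hζ
    rw [Real.rpow_sub (norm_pos_iff.2 hζ), Real.rpow_natCast, Real.rpow_natCast, div_eq_mul_inv]
  refine (locallyIntegrable_inv_norm_eval hp).continuous_mul (by fun_prop)
    |>.integrable_of_isBigO_cocompact hO (integrableAtFilter_rpow_norm_cocompact ?_)
  rw [Complex.finrank_real_complex]
  exact_mod_cast (by omega : (k : ℤ) - p.natDegree < -2)

end Polynomial

theorem MeasureTheory.integral_eq_zero_of_odd {G E : Type*} [MeasurableSpace G] [AddGroup G]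
    [MeasurableNeg G] [NormedAddCommGroup E] [NormedSpace ℝ E] {μ : Measure G} [μ.IsNegInvariant]
    {f : G → E} (hf : ∀ x, f (-x) = -f x) : ∫ x, f x ∂μ = 0 := by
  have h := integral_neg_eq_self f μ
  simp only [hf, integral_neg] at h
  have h2 : (2 : ℝ) • ∫ x, f x ∂μ = 0 := by
    rw [two_smul]
    nth_rewrite 1 [← h]
    exact neg_add_cancel _
  exact (smul_eq_zero.1 h2).resolve_left two_ne_zero

theorem abs_mul_add_sqrt_sq_mul_sq_add_le (t u v : ℝ) :
    |t * u + √(t ^ 2 * u ^ 2 + v)| ≤ 2 * |t| * |u| + √|v| := by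
  have hsqrt : √(t ^ 2 * u ^ 2 + v) ≤ |t| * |u| + √|v| := by
    refine Real.sqrt_le_iff.2 ⟨by positivity, ?_⟩
    nlinarith [Real.sq_sqrt (abs_nonneg v), le_abs_self v, sq_abs t, sq_abs u,
      mul_nonneg (mul_nonneg (abs_nonneg t) (abs_nonneg u)) (Real.sqrt_nonneg |v|)]
  calc |t * u + √(t ^ 2 * u ^ 2 + v)| ≤ |t * u| + √(t ^ 2 * u ^ 2 + v) := by
        simpa only [abs_of_nonneg (Real.sqrt_nonneg _)] using
          abs_add_le (t * u) √(t ^ 2 * u ^ 2 + v)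
    _ ≤ 2 * |t| * |u| + √|v| := by rw [abs_mul]; linarith

noncomputable def genusThreeE (a α' t : ℝ) (ζ : ℂ) : ℝ :=
  t * (1 - ‖ζ‖ ^ 2)
    + √(t ^ 2 * (1 - ‖ζ‖ ^ 2) ^ 2 + 8 * α' * ‖ζ ^ 8 - (a : ℂ) ^ 8‖ / (1 + ‖ζ‖ ^ 2) ^ 2)

section GenusThree

variable (a α' t : ℝ)

theorem genusThreeE_neg (ζ : ℂ) : genusThreeE a α' t (-ζ) = genusThreeE a α' t ζ := by
  simp [genusThreeE, Even.neg_pow (by decide : Even 8)]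

theorem measurable_genusThreeE : Measurable (genusThreeE a α' t) := by
  unfold genusThreeE; fun_prop

theorem norm_pow_eight_sub_le (ζ : ℂ) :
    ‖ζ ^ 8 - (a : ℂ) ^ 8‖ ≤ (1 + a ^ 8) * (1 + ‖ζ‖ ^ 2) ^ 4 := by
  have h1 : ‖ζ‖ ^ 8 ≤ (1 + ‖ζ‖ ^ 2) ^ 4 := by
    rw [show ‖ζ‖ ^ 8 = (‖ζ‖ ^ 2) ^ 4 by ring]
    gcongr; linarith
  have h2 : 1 ≤ (1 + ‖ζ‖ ^ 2) ^ 4 := one_le_pow₀ (by linarith [sq_nonneg ‖ζ‖])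
  calc ‖ζ ^ 8 - (a : ℂ) ^ 8‖ ≤ ‖ζ‖ ^ 8 + a ^ 8 := by
        refine (norm_sub_le _ _).trans_eq ?_
        rw [norm_pow, norm_pow, Complex.norm_real, Real.norm_eq_abs, Even.pow_abs (by decide)]
    _ ≤ (1 + a ^ 8) * (1 + ‖ζ‖ ^ 2) ^ 4 := by nlinarith [pow_nonneg (sq_nonneg a) 4]

theorem abs_genusThreeE_le (ζ : ℂ) :
    |genusThreeE a α' t ζ| ≤ (2 * |t| + √(8 * |α'| * (1 + a ^ 8))) * (1 + ‖ζ‖ ^ 2) := by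
  set N := 1 + ‖ζ‖ ^ 2
  have hN : 0 < N := by positivity
  have h1 : |1 - ‖ζ‖ ^ 2| ≤ N := abs_le.2 ⟨by linarith, by linarith [sq_nonneg ‖ζ‖]⟩
  have h2 : |8 * α' * ‖ζ ^ 8 - (a : ℂ) ^ 8‖ / N ^ 2| ≤ 8 * |α'| * (1 + a ^ 8) * N ^ 2 := by
    rw [abs_div, abs_mul, abs_mul, abs_of_nonneg (norm_nonneg (ζ ^ 8 - (a : ℂ) ^ 8)),
      abs_of_pos (by positivity : 0 < N ^ 2), abs_of_pos (by norm_num : (0 : ℝ) < 8),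
      div_le_iff₀ (by positivity)]
    have := norm_pow_eight_sub_le a ζ
    calc 8 * |α'| * ‖ζ ^ 8 - (a : ℂ) ^ 8‖ ≤ 8 * |α'| * ((1 + a ^ 8) * N ^ 4) := by gcongr
      _ = _ := by ring
  have h3 : √|8 * α' * ‖ζ ^ 8 - (a : ℂ) ^ 8‖ / N ^ 2| ≤ √(8 * |α'| * (1 + a ^ 8)) * N := by
    calc _ ≤ √(8 * |α'| * (1 + a ^ 8) * N ^ 2) := Real.sqrt_le_sqrt h2
      _ = _ := by rw [Real.sqrt_mul (by positivity), Real.sqrt_sq hN.le]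
  calc |genusThreeE a α' t ζ|
      ≤ 2 * |t| * |1 - ‖ζ‖ ^ 2| + √|8 * α' * ‖ζ ^ 8 - (a : ℂ) ^ 8‖ / N ^ 2| :=
        abs_mul_add_sqrt_sq_mul_sq_add_le _ _ _
    _ ≤ 2 * |t| * N + √(8 * |α'| * (1 + a ^ 8)) * N := by gcongr
    _ = _ := by ring

end GenusThree

section GenusThreeIntegrals

variable {a : ℝ} (α' t : ℝ) {c : ℂ → ℝ}

theorem integrable_mul_genusThreeE_div (ha : a ≠ 0) (hc : Measurable c)
    (hc_le : ∀ ζ, |c ζ| ≤ ‖ζ‖) :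
    Integrable fun ζ => c ζ * genusThreeE a α' t ζ / ‖ζ ^ 8 - (a : ℂ) ^ 8‖ := by
  set K := 2 * |t| + √(8 * |α'| * (1 + a ^ 8))
  have hsep : (X ^ 8 - C ((a : ℂ) ^ 8)).Separable :=
    separable_X_pow_sub_C _ (by norm_num) (pow_ne_zero 8 (Complex.ofReal_ne_zero.2 ha))
  have hint (k : ℕ) (hk : k ≤ 5) :
      Integrable fun ζ : ℂ => ‖ζ‖ ^ k * ‖ζ ^ 8 - (a : ℂ) ^ 8‖⁻¹ := by
    simpa using integrable_norm_pow_mul_inv_norm_eval hsep (k := k)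
      (by rw [natDegree_X_pow_sub_C]; omega)
  refine (((hint 1 (by norm_num)).add (hint 3 (by norm_num))).const_mul K).mono'
    ((hc.mul (measurable_genusThreeE a α' t)).div (by fun_prop)).aestronglyMeasurable
    (ae_of_all _ fun ζ => ?_)
  have hE := abs_genusThreeE_le a α' t ζ
  rw [Real.norm_eq_abs, abs_div, abs_mul, abs_of_nonneg (norm_nonneg (ζ ^ 8 - (a : ℂ) ^ 8)),
    div_eq_mul_inv]
  calc |c ζ| * |genusThreeE a α' t ζ| * ‖ζ ^ 8 - (a : ℂ) ^ 8‖⁻¹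
      ≤ ‖ζ‖ * (K * (1 + ‖ζ‖ ^ 2)) * ‖ζ ^ 8 - (a : ℂ) ^ 8‖⁻¹ := by gcongr; exact hc_le ζ
    _ = _ := by simp only [Pi.add_apply, pow_one]; ring

theorem integral_mul_genusThreeE_div_eq_zero (hc_odd : ∀ ζ, c (-ζ) = -c ζ) :
    ∫ ζ, c ζ * genusThreeE a α' t ζ / ‖ζ ^ 8 - (a : ℂ) ^ 8‖ = 0 :=
  integral_eq_zero_of_odd fun ζ => by
    rw [hc_odd, genusThreeE_neg, Even.neg_pow (by decide), neg_mul, neg_div]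

end GenusThreeIntegrals

theorem genus_three_beta_gamma_integrals_vanish_general
    (a α' t : ℝ) (ha0 : 0 < a)
    (E : ℂ → ℝ)
    (hE : ∀ ζ : ℂ, E ζ = t * (1 - ‖ζ‖ ^ 2)
        + Real.sqrt (t ^ 2 * (1 - ‖ζ‖ ^ 2) ^ 2
            + 8 * α' * ‖ζ ^ 8 - (a : ℂ) ^ 8‖ / (1 + ‖ζ‖ ^ 2) ^ 2))
    (h₁ h₂ : ℂ → ℝ)
    (hh₁ : ∀ ζ : ℂ, ζ ^ 8 ≠ (a : ℂ) ^ 8 →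
        h₁ ζ = ζ.re * E ζ / ‖ζ ^ 8 - (a : ℂ) ^ 8‖)
    (hh₂ : ∀ ζ : ℂ, ζ ^ 8 ≠ (a : ℂ) ^ 8 →
        h₂ ζ = ζ.im * E ζ / ‖ζ ^ 8 - (a : ℂ) ^ 8‖) :
    Integrable h₁ volume ∧ Integrable h₂ volume ∧
      (∫ ζ : ℂ, h₁ ζ) = 0 ∧ (∫ ζ : ℂ, h₂ ζ) = 0 := by
  obtain rfl : E = genusThreeE a α' t := funext hE
  have hroots : {ζ : ℂ | ζ ^ 8 = (a : ℂ) ^ 8}.Finite :=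
    (nthRoots 8 ((a : ℂ) ^ 8)).toFinset.finite_toSet.subset fun ζ (hζ : ζ ^ 8 = _) => by
      simpa using hζ
  have hae₁ : h₁ =ᵐ[volume] _ := (hroots.countable.ae_notMem volume).mono hh₁
  have hae₂ : h₂ =ᵐ[volume] _ := (hroots.countable.ae_notMem volume).mono hh₂
  refine ⟨?_, ?_, ?_, ?_⟩
  · exact (integrable_mul_genusThreeE_div α' t ha0.ne' Complex.measurable_re
      Complex.abs_re_le_norm).congr hae₁.symm
  · exact (integrable_mul_genusThreeE_div α' t ha0.ne' Complex.measurable_im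
      Complex.abs_im_le_norm).congr hae₂.symm
  · rw [integral_congr_ae hae₁]
    exact integral_mul_genusThreeE_div_eq_zero α' t fun ζ => Complex.neg_re ζ
  · rw [integral_congr_ae hae₂]
    exact integral_mul_genusThreeE_div_eq_zero α' t fun ζ => Complex.neg_im ζ

/-- In the genus 3 example (`w² = ζ⁸ − a⁸`, `0 < a < 1`, `α′ > 0`, `t ∈ ℝ`), with
`E(ζ) = t(1−|ζ|²) + √(t²(1−|ζ|²)² + 8α′|ζ⁸ − a⁸|/(1+|ζ|²)²)`, the functions
`ζ ↦ Re(ζ)·E(ζ)/|ζ⁸ − a⁸|` and `ζ ↦ Im(ζ)·E(ζ)/|ζ⁸ − a⁸|` (defined away from the eight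
zeros of `ζ⁸ − a⁸` and extended arbitrarily there) are Lebesgue integrable on `ℂ` and
both integrals vanish. -/
theorem genus_three_beta_gamma_integrals_vanish
    (a α' t : ℝ) (ha0 : 0 < a) (ha1 : a < 1) (hα : 0 < α')
    (E : ℂ → ℝ)
    (hE : ∀ ζ : ℂ, E ζ = t * (1 - ‖ζ‖ ^ 2)
        + Real.sqrt (t ^ 2 * (1 - ‖ζ‖ ^ 2) ^ 2
            + 8 * α' * ‖ζ ^ 8 - (a : ℂ) ^ 8‖ / (1 + ‖ζ‖ ^ 2) ^ 2))
    (h₁ h₂ : ℂ → ℝ)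
    (hh₁ : ∀ ζ : ℂ, ζ ^ 8 ≠ (a : ℂ) ^ 8 →
        h₁ ζ = ζ.re * E ζ / ‖ζ ^ 8 - (a : ℂ) ^ 8‖)
    (hh₂ : ∀ ζ : ℂ, ζ ^ 8 ≠ (a : ℂ) ^ 8 →
        h₂ ζ = ζ.im * E ζ / ‖ζ ^ 8 - (a : ℂ) ^ 8‖) :
    Integrable h₁ volume ∧ Integrable h₂ volume ∧
      (∫ ζ : ℂ, h₁ ζ) = 0 ∧ (∫ ζ : ℂ, h₂ ζ) = 0 :=
  genus_three_beta_gamma_integrals_vanish_general a α' t ha0 E hE h₁ h₂ hh₁ hh₂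
end
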